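/- Every element (x,y,z) of the discrete Heisenberg group 𝓗 has a geodesic representative with respect to the generating set X = {a, a⁻¹, b, b⁻¹} of the form a^{α₁} b^{β₁} a^{α₂} b^{β₂} a^{α₃} b^{β₃} or of the form b^{β₁} a^{α₁} b^{β₂} a^{α₂} b^{β₃} a^{α₃}, where each αᵢ, βⱼ ∈ ℤ. -/

import Mathlib

open scoped commutatorElement

/-- The two generators `a, b` of the discrete Heisenberg group. -/
inductive HGen : Type
  | a | b
deriving DecidableEq

/-- Relators of the discrete Heisenberg group `⟨a,b ∣ [a,[a,b]] = [b,[a,b]] = 1⟩`. -/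
def Hrels : Set (FreeGroup HGen) :=
  { ⁅FreeGroup.of HGen.a, ⁅FreeGroup.of HGen.a, FreeGroup.of HGen.b⁆⁆,
    ⁅FreeGroup.of HGen.b, ⁅FreeGroup.of HGen.a, FreeGroup.of HGen.b⁆⁆ }

/-- The discrete Heisenberg group `𝓗`. -/
abbrev Heis : Type := PresentedGroup Hrels

/-- The generator `a` of `𝓗`. -/
def Ha : Heis := PresentedGroup.of HGen.a

/-- The generator `b` of `𝓗`. -/
def Hb : Heis := PresentedGroup.of HGen.b

/-- The four letters of the alphabet `X = {a, a⁻¹, b, b⁻¹}`. -/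
inductive XLetter : Type
  | a | A | b | B
deriving DecidableEq

/-- The element of `𝓗` represented by a letter of `X`. -/
def XLetter.toH : XLetter → Heis
  | .a => Ha
  | .A => Ha⁻¹
  | .b => Hb
  | .B => Hb⁻¹

/-- The element of `𝓗` represented by a word over `X`. -/
def evalX (w : List XLetter) : Heis := (w.map XLetter.toH).prod

/-- The word `a^k` over `X`, for `k ∈ ℤ`. -/
def apow (k : ℤ) : List XLetter :=
  if 0 ≤ k then List.replicate k.toNat XLetter.a else List.replicate (-k).toNat XLetter.A

/-- The word `b^k` over `X`, for `k ∈ ℤ`. -/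
def bpow (k : ℤ) : List XLetter :=
  if 0 ≤ k then List.replicate k.toNat XLetter.b else List.replicate (-k).toNat XLetter.B

/-- The element `(x,y,z)` of `𝓗`, i.e. the element with normal form `[a,b]^z b^y a^x`. -/
def hElt (x y z : ℤ) : Heis := ⁅Ha, Hb⁆ ^ z * Hb ^ y * Ha ^ x

/-- The word length `ℓ_X(g)` of `g ∈ 𝓗` with respect to `X`. -/
noncomputable def lenX (g : Heis) : ℕ :=
  sInf { n | ∃ w : List XLetter, evalX w = g ∧ w.length = n }

/-- A word over `X` is geodesic if its length equals the word length of the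
element it represents. -/
def IsGeodesicX (w : List XLetter) : Prop := w.length = lenX (evalX w)

/-!
Read a word letter by letter as a walk in the coordinates `(x, y, z)`: `a^{±1}` moves `x` by
`±1`, and `b^{±1}` moves `y` by `±1` and `z` by `±x`. If the `x`-coordinate of the walk stays in
`[m, M]` and the word has `r` letters `b` and `s` letters `b⁻¹`, then `z ≤ M r - m s` and the word
has length at least `2 (M - m) - |x| + r + s`. For `x, y, z ≥ 0` this gives `z ≤ (M - m) r`, and
every such `z` is reached within the same length by a word `b^β₁ a^α₁ b a^α₂ b^β₃ a^α₃` that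
sweeps part of the rectangle `[0, M - m] × [0, r]`. The symmetries `a ↦ a⁻¹`, `b ↦ b⁻¹` and word
reversal reduce the general case to `x, y, z ≥ 0`.
-/

lemma commute_commutator_Ha : Commute ⁅Ha, Hb⁆ Ha := by
  have h := PresentedGroup.one_of_mem (show ⁅FreeGroup.of HGen.a, ⁅FreeGroup.of HGen.a,
    FreeGroup.of HGen.b⁆⁆ ∈ Hrels from Set.mem_insert _ _)
  rw [map_commutatorElement, map_commutatorElement] at h
  exact (commutatorElement_eq_one_iff_commute.mp h).symm

lemma commute_commutator_Hb : Commute ⁅Ha, Hb⁆ Hb := by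
  have h := PresentedGroup.one_of_mem (show ⁅FreeGroup.of HGen.b, ⁅FreeGroup.of HGen.a,
    FreeGroup.of HGen.b⁆⁆ ∈ Hrels from Set.mem_insert_of_mem _ rfl)
  rw [map_commutatorElement, map_commutatorElement] at h
  exact (commutatorElement_eq_one_iff_commute.mp h).symm

lemma Hb_mul_Ha_zpow_mul_inv (x : ℤ) : Hb * Ha ^ x * Hb⁻¹ = ⁅Ha, Hb⁆ ^ (-x) * Ha ^ x := by
  have h : Hb * Ha * Hb⁻¹ = ⁅Ha, Hb⁆⁻¹ * Ha := by rw [commutatorElement_def]; group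
  rw [← conj_zpow, h, commute_commutator_Ha.inv_left.mul_zpow, inv_zpow']

lemma Ha_zpow_mul_Hb_mul_inv (x : ℤ) : Ha ^ x * Hb * (Ha ^ x)⁻¹ = ⁅Ha, Hb⁆ ^ x * Hb := by
  rw [mul_inv_eq_iff_eq_mul]
  calc Ha ^ x * Hb = ⁅Ha, Hb⁆ ^ x * (⁅Ha, Hb⁆ ^ (-x) * Ha ^ x) * Hb := by group
    _ = ⁅Ha, Hb⁆ ^ x * Hb * Ha ^ x := by rw [← Hb_mul_Ha_zpow_mul_inv]; group

lemma Ha_zpow_mul_Hb_zpow (x y : ℤ) :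
    Ha ^ x * Hb ^ y = ⁅Ha, Hb⁆ ^ (x * y) * Hb ^ y * Ha ^ x := by
  rw [← mul_inv_eq_iff_eq_mul, ← conj_zpow, Ha_zpow_mul_Hb_mul_inv,
    (commute_commutator_Hb.zpow_left x).mul_zpow, zpow_mul]

lemma hElt_mul_hElt (x y z x' y' z' : ℤ) :
    hElt x y z * hElt x' y' z' = hElt (x + x') (y + y') (z + z' + x * y') := by
  have hca : Commute (⁅Ha, Hb⁆ ^ z') (Ha ^ x) := commute_commutator_Ha.zpow_zpow z' x
  have hcb : Commute (⁅Ha, Hb⁆ ^ (z' + x * y')) (Hb ^ y) := commute_commutator_Hb.zpow_zpow _ y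
  calc hElt x y z * hElt x' y' z'
      = ⁅Ha, Hb⁆ ^ z * Hb ^ y * (Ha ^ x * ⁅Ha, Hb⁆ ^ z') * Hb ^ y' * Ha ^ x' := by
        simp only [hElt, mul_assoc]
    _ = ⁅Ha, Hb⁆ ^ z * Hb ^ y * ⁅Ha, Hb⁆ ^ z' * (Ha ^ x * Hb ^ y') * Ha ^ x' := by
      rw [← hca.eq]; simp only [mul_assoc]
    _ = ⁅Ha, Hb⁆ ^ z * (Hb ^ y * ⁅Ha, Hb⁆ ^ (z' + x * y')) * Hb ^ y' * (Ha ^ x * Ha ^ x') := by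
      rw [Ha_zpow_mul_Hb_zpow, zpow_add]; simp only [mul_assoc]
    _ = hElt (x + x') (y + y') (z + z' + x * y') := by
      rw [← hcb.eq]; simp only [hElt, zpow_add, mul_assoc]

/-- `⟨x, y, z⟩` stands for the element `(x, y, z) = [a,b]^z b^y a^x`, with the product of `𝓗`
written in these coordinates (see `hElt_mul_hElt`). -/
@[ext]
structure HCoord where
  x : ℤ
  y : ℤ
  z : ℤ

namespace HCoord

instance : One HCoord := ⟨⟨0, 0, 0⟩⟩

instance : Mul HCoord := ⟨fun p q => ⟨p.x + q.x, p.y + q.y, p.z + q.z + p.x * q.y⟩⟩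

@[simp] lemma one_x : (1 : HCoord).x = 0 := rfl
@[simp] lemma one_y : (1 : HCoord).y = 0 := rfl
@[simp] lemma one_z : (1 : HCoord).z = 0 := rfl
@[simp] lemma mul_x (p q : HCoord) : (p * q).x = p.x + q.x := rfl
@[simp] lemma mul_y (p q : HCoord) : (p * q).y = p.y + q.y := rfl
@[simp] lemma mul_z (p q : HCoord) : (p * q).z = p.z + q.z + p.x * q.y := rfl

instance : Monoid HCoord where
  mul_assoc p q r := by ext <;> simp <;> ring
  one_mul p := by ext <;> simp
  mul_one p := by ext <;> simp

lemma mk_x_pow (x : ℤ) (n : ℕ) : (⟨x, 0, 0⟩ : HCoord) ^ n = ⟨n * x, 0, 0⟩ := by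
  induction n with
  | zero => ext <;> simp
  | succ n ih => ext <;> simp [pow_succ, ih, add_one_mul]

lemma mk_y_pow (y : ℤ) (n : ℕ) : (⟨0, y, 0⟩ : HCoord) ^ n = ⟨0, n * y, 0⟩ := by
  induction n with
  | zero => ext <;> simp
  | succ n ih => ext <;> simp [pow_succ, ih, add_one_mul]

def toHeis : HCoord →* Heis where
  toFun p := hElt p.x p.y p.z
  map_one' := by simp [hElt]
  map_mul' p q := by simp [hElt_mul_hElt]

def negX : HCoord →* HCoord where
  toFun p := ⟨-p.x, p.y, -p.z⟩
  map_one' := by ext <;> simp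
  map_mul' p q := by ext <;> simp <;> ring

def negY : HCoord →* HCoord where
  toFun p := ⟨p.x, -p.y, -p.z⟩
  map_one' := by ext <;> simp
  map_mul' p q := by ext <;> simp <;> ring

def rev (p : HCoord) : HCoord := ⟨p.x, p.y, p.x * p.y - p.z⟩

lemma rev_mul (p q : HCoord) : rev (p * q) = rev q * rev p := by
  ext <;> simp [rev] <;> ring

end HCoord

namespace XLetter

def coords : XLetter → HCoord
  | .a => ⟨1, 0, 0⟩
  | .A => ⟨-1, 0, 0⟩
  | .b => ⟨0, 1, 0⟩
  | .B => ⟨0, -1, 0⟩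

lemma toHeis_coords (l : XLetter) : HCoord.toHeis l.coords = l.toH := by
  cases l <;> simp [coords, toH, HCoord.toHeis, hElt]

end XLetter

def wordCoords (w : List XLetter) : HCoord := (w.map XLetter.coords).prod

@[simp] lemma wordCoords_nil : wordCoords [] = 1 := rfl

@[simp] lemma wordCoords_append (u v : List XLetter) :
    wordCoords (u ++ v) = wordCoords u * wordCoords v := by
  simp [wordCoords]

@[simp] lemma wordCoords_cons (l : XLetter) (w : List XLetter) :
    wordCoords (l :: w) = l.coords * wordCoords w := by
  simp [wordCoords]

lemma evalX_eq_toHeis_wordCoords (w : List XLetter) :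
    evalX w = HCoord.toHeis (wordCoords w) := by
  simp [evalX, wordCoords, map_list_prod, Function.comp_def, XLetter.toHeis_coords]

lemma evalX_eq_of_wordCoords_eq {u v : List XLetter} (h : wordCoords u = wordCoords v) :
    evalX u = evalX v := by
  rw [evalX_eq_toHeis_wordCoords, h, evalX_eq_toHeis_wordCoords]

@[simp] lemma wordCoords_apow (k : ℤ) : wordCoords (apow k) = ⟨k, 0, 0⟩ := by
  unfold apow
  split <;> simp [wordCoords, List.map_replicate, List.prod_replicate, XLetter.coords,
    HCoord.mk_x_pow] <;> omega

@[simp] lemma wordCoords_bpow (k : ℤ) : wordCoords (bpow k) = ⟨0, k, 0⟩ := by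
  unfold bpow
  split <;> simp [wordCoords, List.map_replicate, List.prod_replicate, XLetter.coords,
    HCoord.mk_y_pow] <;> omega

@[simp] lemma length_apow (k : ℤ) : (apow k).length = k.natAbs := by
  unfold apow; split <;> simp <;> omega

@[simp] lemma length_bpow (k : ℤ) : (bpow k).length = k.natAbs := by
  unfold bpow; split <;> simp <;> omega

/-- `M`, `m` bound the `x`-coordinate of a walk ending at `p` and `r`, `s` count its letters `b`,
`b⁻¹`: each `b` adds at most `M` to `z`, each `b⁻¹` subtracts at least `m`, and visiting both `m`
and `M` before ending at `p.x` costs `2 (M - m) - |p.x|` letters `a^{±1}`. -/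
def WalkBound (n : ℕ) (p : HCoord) : Prop :=
  ∃ M m r s : ℤ, m ≤ 0 ∧ 0 ≤ M ∧ m ≤ p.x ∧ p.x ≤ M ∧ 0 ≤ r ∧ 0 ≤ s ∧ r - s = p.y ∧
    2 * (M - m) - |p.x| + r + s ≤ n ∧ p.z ≤ M * r - m * s

lemma WalkBound.mul_coords {n : ℕ} {p : HCoord} (h : WalkBound n p) (l : XLetter) :
    WalkBound (n + 1) (p * l.coords) := by
  obtain ⟨M, m, r, s, hm, hM, hmx, hxM, hr, hs, hy, hn, hz⟩ := h
  cases l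
  · refine ⟨max M (p.x + 1), m, r, s, ?_⟩
    have : M * r ≤ max M (p.x + 1) * r := mul_le_mul_of_nonneg_right (le_max_left _ _) hr
    simp only [XLetter.coords, HCoord.mul_x, HCoord.mul_y, HCoord.mul_z, add_zero, mul_zero]
    refine ⟨hm, by omega, by omega, by omega, hr, hs, by omega, ?_, by linarith⟩
    push_cast; simp only [abs_eq_max_neg] at *; omega
  · refine ⟨M, min m (p.x - 1), r, s, ?_⟩
    have : min m (p.x - 1) * s ≤ m * s := mul_le_mul_of_nonneg_right (min_le_left _ _) hs
    simp only [XLetter.coords, HCoord.mul_x, HCoord.mul_y, HCoord.mul_z, add_zero, mul_zero]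
    refine ⟨by omega, hM, by omega, by omega, hr, hs, by omega, ?_, by linarith⟩
    push_cast; simp only [abs_eq_max_neg] at *; omega
  · refine ⟨M, m, r + 1, s, ?_⟩
    simp only [XLetter.coords, HCoord.mul_x, HCoord.mul_y, HCoord.mul_z, add_zero, mul_one]
    refine ⟨hm, hM, by omega, by omega, by omega, hs, by omega, by push_cast; omega, ?_⟩
    nlinarith
  · refine ⟨M, m, r, s + 1, ?_⟩
    simp only [XLetter.coords, HCoord.mul_x, HCoord.mul_y, HCoord.mul_z, add_zero, mul_neg,
      mul_one]
    refine ⟨hm, hM, by omega, by omega, hr, by omega, by omega, by push_cast; omega, ?_⟩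
    nlinarith

lemma walkBound_wordCoords (w : List XLetter) : WalkBound w.length (wordCoords w) := by
  induction w using List.reverseRecOn with
  | nil => exact ⟨0, 0, 0, 0, by simp⟩
  | append_singleton w l ih => simpa using ih.mul_coords l

def IsSixBlock (w : List XLetter) : Prop :=
  ∃ α₁ β₁ α₂ β₂ α₃ β₃ : ℤ,
    w = apow α₁ ++ bpow β₁ ++ apow α₂ ++ bpow β₂ ++ apow α₃ ++ bpow β₃ ∨
      w = bpow β₁ ++ apow α₁ ++ bpow β₂ ++ apow α₂ ++ bpow β₃ ++ apow α₃

lemma exists_sixBlock_of_le_mul {p : HCoord} {P Q : ℤ} {n : ℕ} (hx : 0 ≤ p.x) (hy : 0 ≤ p.y)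
    (hz : 0 ≤ p.z) (hxP : p.x ≤ P) (hyQ : p.y ≤ Q) (hzPQ : p.z ≤ P * Q)
    (hn : 2 * P + 2 * Q - p.x - p.y ≤ n) :
    ∃ w, IsSixBlock w ∧ wordCoords w = p ∧ w.length ≤ n := by
  obtain ⟨x, y, z⟩ := p
  dsimp only at *
  rcases hz.eq_or_lt with rfl | hz
  · refine ⟨bpow y ++ apow x ++ bpow 0 ++ apow 0 ++ bpow 0 ++ apow 0,
      ⟨x, y, 0, 0, 0, 0, .inr rfl⟩, by ext <;> simp, ?_⟩
    simp only [List.length_append, length_apow, length_bpow]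
    omega
  have hP : 0 < P := by nlinarith
  have hzqr := Int.mul_ediv_add_emod (z - 1) P
  have hq := Int.ediv_nonneg (by omega : 0 ≤ z - 1) hP.le
  have hr := Int.emod_nonneg (z - 1) hP.ne'
  have hrP := Int.emod_lt_of_pos (z - 1) hP
  set q := (z - 1) / P
  set r := (z - 1) % P
  have hqQ : q < Q := by nlinarith
  -- Write `z = q P + (r + 1)` with `0 ≤ r < P`: in `b^(y-1-q) a^(r+1) b a^(P-r-1) b^q a^(x-P)`
  -- the single `b` collects `r + 1` and the block `b^q` collects `q P`.
  refine ⟨bpow (y - 1 - q) ++ apow (r + 1) ++ bpow 1 ++ apow (P - r - 1) ++ bpow q ++ apow (x - P),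
    ⟨r + 1, y - 1 - q, P - r - 1, 1, x - P, q, .inr rfl⟩, ?_, ?_⟩
  · ext <;> simp <;> linarith
  · simp only [List.length_append, length_apow, length_bpow]
    omega

namespace XLetter

def swapA : XLetter → XLetter
  | .a => .A
  | .A => .a
  | l => l

def swapB : XLetter → XLetter
  | .b => .B
  | .B => .b
  | l => l

lemma swapA_involutive : Function.Involutive swapA := by
  intro l; cases l <;> rfl

lemma swapB_involutive : Function.Involutive swapB := by
  intro l; cases l <;> rfl

end XLetter

lemma wordCoords_map_swapA (w : List XLetter) :
    wordCoords (w.map XLetter.swapA) = HCoord.negX (wordCoords w) := by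
  simp only [wordCoords, map_list_prod, List.map_map]
  congr 2; funext l; cases l <;> ext <;> rfl

lemma wordCoords_map_swapB (w : List XLetter) :
    wordCoords (w.map XLetter.swapB) = HCoord.negY (wordCoords w) := by
  simp only [wordCoords, map_list_prod, List.map_map]
  congr 2; funext l; cases l <;> ext <;> rfl

lemma wordCoords_reverse (w : List XLetter) : wordCoords w.reverse = (wordCoords w).rev := by
  induction w with
  | nil => rfl
  | cons l w ih =>
    simp only [List.reverse_cons, wordCoords_append, ih, wordCoords_cons, wordCoords_nil,
      mul_one, HCoord.rev_mul]
    cases l <;> rfl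

lemma map_swapA_apow (k : ℤ) : (apow k).map XLetter.swapA = apow (-k) := by
  unfold apow; split_ifs <;> simp [List.map_replicate, XLetter.swapA] <;> omega

lemma map_swapA_bpow (k : ℤ) : (bpow k).map XLetter.swapA = bpow k := by
  unfold bpow; split_ifs <;> simp [List.map_replicate, XLetter.swapA]

lemma map_swapB_apow (k : ℤ) : (apow k).map XLetter.swapB = apow k := by
  unfold apow; split_ifs <;> simp [List.map_replicate, XLetter.swapB]

lemma map_swapB_bpow (k : ℤ) : (bpow k).map XLetter.swapB = bpow (-k) := by
  unfold bpow; split_ifs <;> simp [List.map_replicate, XLetter.swapB] <;> omega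

lemma IsSixBlock.map {f : XLetter → XLetter} (ha : ∀ k, ∃ k', (apow k).map f = apow k')
    (hb : ∀ k, ∃ k', (bpow k).map f = bpow k') {w : List XLetter} (h : IsSixBlock w) :
    IsSixBlock (w.map f) := by
  choose fa hfa using ha
  choose fb hfb using hb
  obtain ⟨α₁, β₁, α₂, β₂, α₃, β₃, rfl | rfl⟩ := h
  · exact ⟨fa α₁, fb β₁, fa α₂, fb β₂, fa α₃, fb β₃, .inl (by simp [hfa, hfb])⟩
  · exact ⟨fa α₁, fb β₁, fa α₂, fb β₂, fa α₃, fb β₃, .inr (by simp [hfa, hfb])⟩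

lemma IsSixBlock.reverse {w : List XLetter} (h : IsSixBlock w) : IsSixBlock w.reverse := by
  have ha (k : ℤ) : (apow k).reverse = apow k := by unfold apow; split_ifs <;> simp
  have hb (k : ℤ) : (bpow k).reverse = bpow k := by unfold bpow; split_ifs <;> simp
  obtain ⟨α₁, β₁, α₂, β₂, α₃, β₃, rfl | rfl⟩ := h
  · exact ⟨α₃, β₃, α₂, β₂, α₁, β₁, .inr (by simp [ha, hb])⟩
  · exact ⟨α₃, β₃, α₂, β₂, α₁, β₁, .inl (by simp [ha, hb])⟩

def HasSixBlockReplacement (w : List XLetter) : Prop :=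
  ∃ w', IsSixBlock w' ∧ wordCoords w' = wordCoords w ∧ w'.length ≤ w.length

lemma HasSixBlockReplacement.of_involutive {f : List XLetter → List XLetter}
    (hf : Function.Involutive f) (hlen : ∀ w, (f w).length = w.length)
    (hblock : ∀ w, IsSixBlock w → IsSixBlock (f w))
    (hcoords : ∀ u v, wordCoords u = wordCoords v → wordCoords (f u) = wordCoords (f v))
    {w : List XLetter} (h : HasSixBlockReplacement (f w)) : HasSixBlockReplacement w := by
  obtain ⟨w', hw', hcw, hlw⟩ := h
  refine ⟨f w', hblock w' hw', ?_, ?_⟩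
  · rw [hcoords _ _ hcw, hf w]
  · rw [hlen]; rwa [hlen] at hlw

lemma hasSixBlockReplacement_of_nonneg {w : List XLetter} (hx : 0 ≤ (wordCoords w).x)
    (hy : 0 ≤ (wordCoords w).y) (hz : 0 ≤ (wordCoords w).z) : HasSixBlockReplacement w := by
  obtain ⟨M, m, r, s, hm, hM, hmx, hxM, hr, hs, hrs, hn, hzb⟩ := walkBound_wordCoords w
  rw [abs_of_nonneg hx] at hn
  exact exists_sixBlock_of_le_mul hx hy hz (P := M - m) (Q := r) (by omega) (by omega)
    (by nlinarith) (by omega)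

lemma hasSixBlockReplacement_of_nonneg_xy {w : List XLetter} (hx : 0 ≤ (wordCoords w).x)
    (hy : 0 ≤ (wordCoords w).y) : HasSixBlockReplacement w := by
  by_cases hz : 0 ≤ (wordCoords w).z
  · exact hasSixBlockReplacement_of_nonneg hx hy hz
  refine .of_involutive List.reverse_involutive (fun _ => List.length_reverse) (fun _ => .reverse)
    (fun u v h => by rw [wordCoords_reverse, wordCoords_reverse, h]) ?_
  apply hasSixBlockReplacement_of_nonneg <;>
    simp only [wordCoords_reverse, HCoord.rev] <;> nlinarith

lemma hasSixBlockReplacement_of_nonneg_x {w : List XLetter} (hx : 0 ≤ (wordCoords w).x) :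
    HasSixBlockReplacement w := by
  by_cases hy : 0 ≤ (wordCoords w).y
  · exact hasSixBlockReplacement_of_nonneg_xy hx hy
  refine .of_involutive XLetter.swapB_involutive.list_map (fun _ => List.length_map _)
    (fun _ => .map (fun k => ⟨k, map_swapB_apow k⟩) (fun k => ⟨-k, map_swapB_bpow k⟩))
    (fun u v h => by rw [wordCoords_map_swapB, wordCoords_map_swapB, h]) ?_
  apply hasSixBlockReplacement_of_nonneg_xy <;>
    simp only [wordCoords_map_swapB, HCoord.negY, MonoidHom.coe_mk, OneHom.coe_mk] <;> omega

lemma hasSixBlockReplacement (w : List XLetter) : HasSixBlockReplacement w := by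
  by_cases hx : 0 ≤ (wordCoords w).x
  · exact hasSixBlockReplacement_of_nonneg_x hx
  refine .of_involutive XLetter.swapA_involutive.list_map (fun _ => List.length_map _)
    (fun _ => .map (fun k => ⟨-k, map_swapA_apow k⟩) (fun k => ⟨k, map_swapA_bpow k⟩))
    (fun u v h => by rw [wordCoords_map_swapA, wordCoords_map_swapA, h]) ?_
  apply hasSixBlockReplacement_of_nonneg_x
  simp only [wordCoords_map_swapA, HCoord.negX, MonoidHom.coe_mk, OneHom.coe_mk]
  omega

lemma lenX_le_length (w : List XLetter) : lenX (evalX w) ≤ w.length :=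
  Nat.sInf_le ⟨w, rfl, rfl⟩

lemma exists_length_eq_lenX {g : Heis} (h : ∃ w, evalX w = g) :
    ∃ u, evalX u = g ∧ u.length = lenX g := by
  obtain ⟨w, hw⟩ := h
  exact Nat.sInf_mem (s := {n | ∃ w, evalX w = g ∧ w.length = n}) ⟨w.length, w, hw, rfl⟩

lemma isGeodesicX_of_length_le {w : List XLetter} (h : w.length ≤ lenX (evalX w)) :
    IsGeodesicX w :=
  h.antisymm (lenX_le_length w)

lemma exists_evalX_eq_hElt (x y z : ℤ) : ∃ w, evalX w = hElt x y z := by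
  have hc : wordCoords (bpow (y - z) ++ apow 1 ++ bpow z ++ apow (x - 1)) = ⟨x, y, z⟩ := by
    ext <;> simp
  exact ⟨_, by rw [evalX_eq_toHeis_wordCoords, hc]; rfl⟩

/-- Every element `(x,y,z)` of the discrete Heisenberg group `𝓗` has a
geodesic representative with respect to `X = {a,a⁻¹,b,b⁻¹}` of the form
`a^{α₁} b^{β₁} a^{α₂} b^{β₂} a^{α₃} b^{β₃}` or `b^{β₁} a^{α₁} b^{β₂} a^{α₂} b^{β₃} a^{α₃}`. -/
theorem heisenberg_geodesic_normal_form (x y z : ℤ) :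
    ∃ α₁ β₁ α₂ β₂ α₃ β₃ : ℤ, ∃ w : List XLetter,
      (w = apow α₁ ++ bpow β₁ ++ apow α₂ ++ bpow β₂ ++ apow α₃ ++ bpow β₃ ∨
        w = bpow β₁ ++ apow α₁ ++ bpow β₂ ++ apow α₂ ++ bpow β₃ ++ apow α₃) ∧
      evalX w = hElt x y z ∧ IsGeodesicX w := by
  obtain ⟨u, hu, hlen⟩ := exists_length_eq_lenX (exists_evalX_eq_hElt x y z)
  obtain ⟨w, ⟨α₁, β₁, α₂, β₂, α₃, β₃, hw⟩, hwu, hwlen⟩ := hasSixBlockReplacement u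
  have hev : evalX w = hElt x y z := (evalX_eq_of_wordCoords_eq hwu).trans hu
  exact ⟨α₁, β₁, α₂, β₂, α₃, β₃, w, hw, hev, isGeodesicX_of_length_le (by rw [hev]; omega)⟩
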